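/- arXiv:1610.08464 — 3 statements merged into one kernel-verified Lean document; each statement's English description precedes it below -/
import Mathlib

section
/- Let G be a group that is linear over a field of positive characteristic (i.e., G embeds in GL(d,F) for some d and some field F with char F > 0), and let g ∈ G be an element of infinite order. Then the image of g in the abelianization of the centralizer C_G(g) has infinite order. -/
/-!
Pass to the algebraic closure `K` of `F`. The generalised eigenspaces of `g` are invariant under
`C_G(g)`, so `h ↦ det (h|W_μ)` is a character of `C_G(g)`; it factors through the
abelianisation and sends `g` to `μ ^ dim W_μ`. Hence every eigenvalue of `g` is a root of unity,
so `g ^ N - 1` is nilpotent for some `N > 0`, and in characteristic `p` a unipotent element has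
`p`-power order.
-/

open Module Polynomial

theorem isOfFinOrder_of_isNilpotent_sub_one {R : Type*} [Ring R] (p : ℕ) [hp : Fact p.Prime]
    [CharP R p] {u : R} (h : IsNilpotent (u - 1)) : IsOfFinOrder u := by
  obtain ⟨k, hk⟩ := h
  have hpow : (u - 1) ^ p ^ k = 0 := pow_eq_zero_of_le (k.lt_pow_self hp.out.one_lt).le hk
  rw [sub_pow_char_pow_of_commute _ _ (Commute.one_right u), one_pow, sub_eq_zero] at hpow
  exact isOfFinOrder_iff_pow_eq_one.mpr ⟨p ^ k, pow_pos hp.out.pos k, hpow⟩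

theorem IsOfFinOrder.of_abelianization {H M : Type*} [Group H] [CommMonoid M] (φ : H →* M)
    {x : H} (h : IsOfFinOrder (Abelianization.of x)) : IsOfFinOrder (φ x) := by
  simpa using (Units.coeHom M).isOfFinOrder ((Abelianization.lift φ.toHomUnits).isOfFinOrder h)

theorem LinearMap.det_eq_pow_finrank_of_isNilpotent_sub_smul {R M : Type*} [CommRing R]
    [IsDomain R] [AddCommGroup M] [Module R M] [Module.Free R M] [Module.Finite R M]
    {f : Module.End R M} {μ : R} (h : IsNilpotent (f - μ • 1)) :
    f.det = μ ^ finrank R M := by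
  have hchar : f.charpoly = (X - C μ) ^ finrank R M := by
    have hsub := h.charpoly_eq_X_pow_finrank
    rw [charpoly_sub_smul] at hsub
    calc f.charpoly = (f.charpoly.comp (X + C μ)).comp (X - C μ) := by
          rw [Polynomial.comp_assoc]; simp
      _ = _ := by rw [hsub]; simp
  rw [det_eq_sign_charpoly_coeff, hchar, coeff_zero_eq_eval_zero, eval_pow, ← mul_pow]
  simp

namespace Module.End

variable {K V : Type*} [Field K] [AddCommGroup V] [Module K V] [FiniteDimensional K V]

theorem det_restrict_maxGenEigenspace (f : End K V) (μ : K) :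
    (f.restrict (f.mapsTo_maxGenEigenspace_of_comm (Commute.refl f) μ)).det =
      μ ^ finrank K (f.maxGenEigenspace μ) := by
  apply LinearMap.det_eq_pow_finrank_of_isNilpotent_sub_smul
  convert f.isNilpotent_restrict_maxGenEigenspace_sub_algebraMap μ using 1
  ext
  simp [Algebra.algebraMap_eq_smul_one]
  rfl

theorem isNilpotent_aeval_of_forall_hasEigenvalue_isRoot [IsAlgClosed K] {f : End K V}
    {P : K[X]} (h : ∀ μ, f.HasEigenvalue μ → P.IsRoot μ) : IsNilpotent (aeval f P) := by
  suffices ⊤ ≤ (aeval f P).maxGenEigenspace 0 by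
    rw [isNilpotent_iff_of_finite]
    intro v
    simpa using this (Submodule.mem_top (x := v))
  rw [← iSup_maxGenEigenspace_eq_top f, iSup_le_iff]
  intro μ v hv
  rcases eq_or_ne v 0 with rfl | hv0
  · exact zero_mem _
  have hμ : f.HasEigenvalue μ :=
    HasUnifEigenvalue.lt zero_lt_one ((Submodule.ne_bot_iff _).mpr ⟨v, hv, hv0⟩)
  obtain ⟨q, hq⟩ := dvd_iff_isRoot.mpr (h μ hμ)
  have hlinear : aeval f (X - C μ) = f - μ • 1 := by simp [Algebra.algebraMap_eq_smul_one]
  have hfactor : aeval f P = aeval f q * (f - μ • 1) := by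
    rw [hq, mul_comm, map_mul, hlinear]
  have hcomm : Commute (aeval f q) (f - μ • 1) :=
    hlinear ▸ (Commute.all q (X - C μ)).map (aeval f)
  obtain ⟨k, hk⟩ := (mem_maxGenEigenspace _ _ _).mp hv
  refine (mem_maxGenEigenspace _ _ _).mpr ⟨k, ?_⟩
  rw [zero_smul, sub_zero, hfactor, hcomm.mul_pow, mul_apply, hk, map_zero]

theorem isOfFinOrder_of_forall_hasEigenvalue [IsAlgClosed K] (p : ℕ) [Fact p.Prime] [CharP K p]
    {f : End K V} (h : ∀ μ, f.HasEigenvalue μ → IsOfFinOrder μ) : IsOfFinOrder f := by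
  cases subsingleton_or_nontrivial V
  · exact Subsingleton.elim f 1 ▸ IsOfFinOrder.one
  have : CharP (End K V) p := charP_of_injective_algebraMap' K p
  set N := ∏ μ ∈ f.finite_hasEigenvalue.toFinset, orderOf μ
  have hN : N ≠ 0 := Finset.prod_ne_zero_iff.mpr fun μ hμ ↦
    (h μ (by simpa using hμ)).orderOf_pos.ne'
  have hroot : ∀ μ, f.HasEigenvalue μ → (X ^ N - 1 : K[X]).IsRoot μ := by
    intro μ hμ
    simpa [sub_eq_zero] using
      orderOf_dvd_iff_pow_eq_one.mp (Finset.dvd_prod_of_mem _ (by simpa using hμ))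
  have hnil : IsNilpotent (f ^ N - 1) := by
    simpa using isNilpotent_aeval_of_forall_hasEigenvalue_isRoot hroot
  exact (isOfFinOrder_of_isNilpotent_sub_one p hnil).of_pow hN

end Module.End

theorem Representation.isOfFinOrder_of_hasEigenvalue {K V H : Type*} [Field K] [AddCommGroup V]
    [Module K V] [FiniteDimensional K V] [Group H] (ρ : Representation K H V) {x : H}
    (hx : ∀ h, Commute x h) (hfin : IsOfFinOrder (Abelianization.of x)) {μ : K}
    (hμ : End.HasEigenvalue (ρ x) μ) : IsOfFinOrder μ := by
  let W : Subrepresentation ρ := ⟨End.maxGenEigenspace (ρ x) μ,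
    fun h _ hv ↦ End.mapsTo_maxGenEigenspace_of_comm ((hx h).map ρ) μ hv⟩
  have hdet : IsOfFinOrder (μ ^ finrank K W.toSubmodule) := by
    have := hfin.of_abelianization (LinearMap.det.comp W.toRepresentation)
    have hrestrict : W.toRepresentation x = (ρ x).restrict (W.apply_mem_toSubmodule x) := rfl
    rwa [MonoidHom.comp_apply, hrestrict, End.det_restrict_maxGenEigenspace] at this
  have hpos : 0 < finrank K W.toSubmodule := by
    refine Nat.pos_of_ne_zero fun h0 ↦ hμ ?_
    rw [eq_bot_iff, ← Submodule.finrank_eq_zero.mp h0]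
    exact End.eigenspace_le_maxGenEigenspace
  exact hdet.of_pow hpos.ne'

theorem stmt_8 (G : Type*) [Group G] (F : Type*) [Field F] (p : ℕ) [CharP F p]
    (hp : 0 < p) (d : ℕ) (ρ : G →* GL (Fin d) F) (hρ : Function.Injective ρ)
    (g : G) (hg : ¬ IsOfFinOrder g)
    (hmem : g ∈ Subgroup.centralizer ({g} : Set G)) :
    ¬ IsOfFinOrder (Abelianization.of
      (⟨g, hmem⟩ : Subgroup.centralizer ({g} : Set G))) := by
  have : NeZero p := ⟨hp.ne'⟩
  have := CharP.char_is_prime_of_pos F p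
  let K := AlgebraicClosure F
  let ι : Matrix (Fin d) (Fin d) F →+* End K (Fin d → K) :=
    Matrix.toLinAlgEquiv'.toRingHom.comp (algebraMap F K).mapMatrix
  let σ : G →* End K (Fin d → K) := ι.toMonoidHom.comp ((Units.coeHom _).comp ρ)
  have hσ : Function.Injective σ :=
    (Matrix.toLinAlgEquiv'.injective.comp (Matrix.map_injective (algebraMap F K).injective)).comp
      (Units.val_injective.comp hρ)
  intro hfin
  refine hg (hσ.isOfFinOrder_iff.mp (Module.End.isOfFinOrder_of_forall_hasEigenvalue p
    fun μ hμ ↦ ?_))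
  exact Representation.isOfFinOrder_of_hasEigenvalue (σ.comp (Subgroup.centralizer {g}).subtype)
    (fun h ↦ Subtype.ext (h.2 g rfl)) hfin hμ
end

section
/- Let G be a group containing an element g of infinite order whose centralizer C_G(g) has finite abelianization. Then G admits no faithful linear representation over any field of positive characteristic. -/
/-!
Pass to an algebraic closure `K` of `F`; a faithful representation stays faithful. Let `C` be
the centraliser of `g`, so that `g` is central in `C`, and let `n = d`, `n₀ = |C^ab|`. Every
generalised eigenspace `W` of `g`, say for the eigenvalue `μ`, is then `C`-stable, and
`c ↦ det (c|W)` is a character of `C`, hence killed by `n₀`. In characteristic `p`, `g|W - μ` is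
nilpotent, so `(g|W)^(p^n) = μ^(p^n)`, and taking determinants gives `μ^(p^n · dim W · n₀) = 1`.
Thus `g^(p^n · n₀ · n!)` is the identity on every generalised eigenspace, hence on `K^n`, and
faithfulness forces `g` to have finite order.
-/

open Module

theorem MonoidHom.pow_natCard_abelianization_eq_one {C A : Type*} [Group C] [CommGroup A]
    (φ : C →* A) (c : C) : φ c ^ Nat.card (Abelianization C) = 1 := by
  rw [← Abelianization.lift_apply_of φ c, ← map_pow, pow_card_eq_one', map_one]

theorem Representation.det_pow_natCard_abelianization_eq_one {K V C : Type*} [Field K]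
    [AddCommGroup V] [Module K V] [Group C] (ρ : Representation K C V) (c : C) :
    (ρ c).det ^ Nat.card (Abelianization C) = 1 := by
  simpa using congrArg Units.val
    ((LinearMap.det.comp ρ).toHomUnits.pow_natCard_abelianization_eq_one c)

theorem Module.End.pow_char_pow_apply_of_mem_genEigenspace {K V : Type*} [Field K]
    [AddCommGroup V] [Module K V] (p : ℕ) [Fact p.Prime] [CharP K p] {f : End K V} {μ : K} {k : ℕ}
    {x : V} (hx : x ∈ f.genEigenspace μ (p ^ k : ℕ)) : (f ^ p ^ k) x = μ ^ p ^ k • x := by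
  -- `End K V` has characteristic `p` only when `V ≠ 0`.
  nontriviality V
  have : CharP (End K V) p := charP_of_injective_algebraMap' K p
  have hsplit : f ^ p ^ k = (f - μ • 1) ^ p ^ k + (μ • 1) ^ p ^ k := by
    rw [← add_pow_char_pow_of_commute, sub_add_cancel]
    exact ((Commute.one_right f).smul_right μ).sub_left ((Commute.one_right _).smul_right μ)
  rw [End.mem_genEigenspace_nat, LinearMap.mem_ker] at hx
  simp [hsplit, hx, smul_pow]

theorem Subgroup.mk_mem_center_centralizer_singleton {G : Type*} [Group G] (g : G) :
    (⟨g, mem_centralizer_singleton_iff.mpr rfl⟩ : centralizer ({g} : Set G)) ∈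
      center (centralizer ({g} : Set G)) :=
  mem_center_iff.mpr fun c => Subtype.ext (mem_centralizer_singleton_iff.mp c.2)

namespace Representation

open scoped Nat

variable {K V C : Type*} [Field K] [AddCommGroup V] [Module K V] [Group C]
  (ρ : Representation K C V) {c₀ : C}

theorem commute_apply_of_mem_center (hc₀ : c₀ ∈ Subgroup.center C) (c : C) :
    Commute (ρ c₀) (ρ c) := by
  rw [Commute, SemiconjBy, ← map_mul, ← map_mul, Subgroup.mem_center_iff.mp hc₀ c]

def onMaxGenEigenspace (hc₀ : c₀ ∈ Subgroup.center C) (μ : K) :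
    Representation K C (End.maxGenEigenspace (ρ c₀) μ) :=
  ρ.subrepresentation _ fun c =>
    End.mapsTo_maxGenEigenspace_of_comm (ρ.commute_apply_of_mem_center hc₀ c) μ

@[simp]
theorem onMaxGenEigenspace_apply_coe (hc₀ : c₀ ∈ Subgroup.center C) (μ : K) (c : C)
    (x : End.maxGenEigenspace (ρ c₀) μ) : (ρ.onMaxGenEigenspace hc₀ μ c x : V) = ρ c x :=
  rfl

section CharP

variable [FiniteDimensional K V] (p : ℕ) [Fact p.Prime] [CharP K p]

theorem onMaxGenEigenspace_apply_pow_char_pow (hc₀ : c₀ ∈ Subgroup.center C) (μ : K) :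
    ρ.onMaxGenEigenspace hc₀ μ c₀ ^ p ^ finrank K V = μ ^ p ^ finrank K V • 1 := by
  ext ⟨x, hx⟩
  rw [End.maxGenEigenspace_eq_genEigenspace_finrank] at hx
  have hle : finrank K V ≤ p ^ finrank K V := (Nat.lt_pow_self (Fact.out : p.Prime).one_lt).le
  have hx' : x ∈ End.genEigenspace (ρ c₀) μ (p ^ finrank K V : ℕ) :=
    (End.genEigenspace (ρ c₀) μ).monotone (by exact_mod_cast hle) hx
  simpa [← map_pow] using End.pow_char_pow_apply_of_mem_genEigenspace p hx'

theorem pow_eq_one_of_maxGenEigenspace_ne_bot (hc₀ : c₀ ∈ Subgroup.center C) {μ : K}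
    (hμ : End.maxGenEigenspace (ρ c₀) μ ≠ ⊥) :
    μ ^ (p ^ finrank K V * (Nat.card (Abelianization C) * (finrank K V)!)) = 1 := by
  set W := End.maxGenEigenspace (ρ c₀) μ
  set q := p ^ finrank K V
  set n₀ := Nat.card (Abelianization C)
  have : Nontrivial W := Submodule.nontrivial_iff_ne_bot.mpr hμ
  have hdet : (ρ.onMaxGenEigenspace hc₀ μ c₀).det ^ q = μ ^ (q * finrank K W) := by
    rw [← map_pow, onMaxGenEigenspace_apply_pow_char_pow, LinearMap.det_smul, map_one,
      mul_one, pow_mul]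
  have hroot : μ ^ (q * finrank K W * n₀) = 1 := by
    rw [pow_mul, ← hdet, ← pow_mul, mul_comm, pow_mul, det_pow_natCard_abelianization_eq_one,
      one_pow]
  obtain ⟨t, ht⟩ := Nat.dvd_factorial finrank_pos (Submodule.finrank_le W)
  rw [ht, show q * (n₀ * (finrank K W * t)) = q * finrank K W * n₀ * t by ring, pow_mul, hroot,
    one_pow]

theorem onMaxGenEigenspace_apply_pow_eq_one (hc₀ : c₀ ∈ Subgroup.center C) (μ : K) :
    ρ.onMaxGenEigenspace hc₀ μ
      (c₀ ^ (p ^ finrank K V * (Nat.card (Abelianization C) * (finrank K V)!))) = 1 := by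
  by_cases hμ : End.maxGenEigenspace (ρ c₀) μ = ⊥
  · have : Subsingleton (End.maxGenEigenspace (ρ c₀) μ) :=
      Submodule.subsingleton_iff_eq_bot.mpr hμ
    exact Subsingleton.elim _ _
  · rw [pow_mul, map_pow, map_pow, onMaxGenEigenspace_apply_pow_char_pow, smul_pow, one_pow,
      ← pow_mul, pow_eq_one_of_maxGenEigenspace_ne_bot ρ p hc₀ hμ, one_smul]

theorem apply_pow_eq_one_of_mem_center [IsAlgClosed K] (hc₀ : c₀ ∈ Subgroup.center C) :
    ρ (c₀ ^ (p ^ finrank K V * (Nat.card (Abelianization C) * (finrank K V)!))) = 1 := by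
  have hspan : Submodule.span K (⋃ μ, (End.maxGenEigenspace (ρ c₀) μ : Set V)) = ⊤ := by
    rw [← Submodule.iSup_eq_span, End.iSup_maxGenEigenspace_eq_top]
  refine LinearMap.ext_on hspan fun x hx => ?_
  obtain ⟨μ, hx⟩ := Set.mem_iUnion.mp hx
  exact congrArg Subtype.val
    (LinearMap.congr_fun (ρ.onMaxGenEigenspace_apply_pow_eq_one p hc₀ μ) ⟨x, hx⟩)

end CharP

theorem isOfFinOrder_apply_of_mem_center [IsAlgClosed K] (p : ℕ) [Fact p.Prime] [CharP K p]
    [FiniteDimensional K V] [Finite (Abelianization C)] (hc₀ : c₀ ∈ Subgroup.center C) :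
    IsOfFinOrder (ρ c₀) := by
  refine isOfFinOrder_iff_pow_eq_one.mpr ⟨_, ?_, (map_pow ρ c₀ _).symm.trans
    (ρ.apply_pow_eq_one_of_mem_center p hc₀)⟩
  exact Nat.mul_pos (pow_pos (Fact.out : p.Prime).pos _)
    (Nat.mul_pos Nat.card_pos (Nat.factorial_pos _))

theorem isOfFinOrder_apply_of_finite_abelianization_centralizer {G : Type*} [IsAlgClosed K]
    (p : ℕ) [Fact p.Prime] [CharP K p] [FiniteDimensional K V] [Group G]
    (ρ : Representation K G V) (g : G)
    [Finite (Abelianization (Subgroup.centralizer ({g} : Set G)))] : IsOfFinOrder (ρ g) :=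
  isOfFinOrder_apply_of_mem_center (ρ.comp (Subgroup.centralizer {g}).subtype) p
    (Subgroup.mk_mem_center_centralizer_singleton g)

end Representation

theorem Matrix.GeneralLinearGroup.exists_injective_monoidHom_end {n F K : Type*} [Fintype n]
    [DecidableEq n] [Field F] [Field K] (f : F →+* K) :
    ∃ ι : GL n F →* Module.End K (n → K), Function.Injective ι :=
  ⟨Matrix.toLinAlgEquiv'.toRingEquiv.toMonoidHom.comp ((Units.coeHom _).comp (map f)),
    Matrix.toLinAlgEquiv'.injective.comp fun _ _ h =>
      Units.ext (Matrix.map_injective f.injective h)⟩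

theorem stmt_10 (G : Type*) [Group G] (g : G) (hg : ¬ IsOfFinOrder g)
    (hfin : Finite (Abelianization (Subgroup.centralizer ({g} : Set G)))) :
    ∀ (d : ℕ) (F : Type*) [Field F] (p : ℕ), 0 < p → CharP F p →
      ∀ ρ : G →* GL (Fin d) F, ¬ Function.Injective ρ := by
  intro d F _ p hp _ ρ hρ
  have : NeZero p := ⟨hp.ne'⟩
  have : Fact p.Prime := CharP.char_is_prime_of_pos F p
  obtain ⟨ι, hι⟩ := Matrix.GeneralLinearGroup.exists_injective_monoidHom_end (n := Fin d)
    (algebraMap F (AlgebraicClosure F))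
  have hιρ : Function.Injective (ι.comp ρ) := hι.comp hρ
  exact hg (hιρ.isOfFinOrder_iff.mp
    (Representation.isOfFinOrder_apply_of_finite_abelianization_centralizer p _ g))
end

section
/- A finitely generated group that is linear over some field of positive characteristic cannot contain an infinite-order element g together with a finite-index subgroup H of C_G(g) containing g such that every homomorphism from C_G(g) to an abelian group kills some power of g. -/
/-!
Extend scalars to an algebraic closure `K` of `F`. In characteristic `p`, an endomorphism whose
eigenvalues are all roots of unity has finite order: its minimal polynomial divides
`(X ^ N - 1) ^ p ^ k = X ^ (N * p ^ k) - 1`. Hence the image of `g` has an eigenvalue `μ` of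
infinite order. The centralizer of `g` preserves the `μ`-eigenspace of `g`, and the determinant
on it is a character `C_G(g) → Kˣ` sending `g` to a positive power of `μ`. As `ℚ` is an injective
`ℤ`-module, this character can be pushed to `Multiplicative ℚ` (a target in `Type`, unlike `Kˣ`)
without making `g` torsion.
-/

open Polynomial

theorem Multiset.exists_pow_eq_one_of_forall_isOfFinOrder {M : Type*} [Monoid M]
    {s : Multiset M} (h : ∀ x ∈ s, IsOfFinOrder x) : ∃ n, 0 < n ∧ ∀ x ∈ s, x ^ n = 1 :=
  ⟨(s.map orderOf).prod,
    Nat.pos_of_ne_zero <| Multiset.prod_ne_zero fun h0 => by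
      obtain ⟨x, hx, hx0⟩ := Multiset.mem_map.mp h0
      exact (h x hx).orderOf_pos.ne' hx0,
    fun x hx => orderOf_dvd_iff_pow_eq_one.mp (Multiset.dvd_prod (Multiset.mem_map_of_mem _ hx))⟩

theorem Polynomial.Monic.exists_dvd_X_pow_sub_one {R : Type*} [CommRing R] [IsDomain R]
    (p : ℕ) [CharP R p] [Fact p.Prime] {q : R[X]} (hm : q.Monic) (hs : q.Splits)
    (h : ∀ μ ∈ q.roots, IsOfFinOrder μ) : ∃ n, 0 < n ∧ q ∣ X ^ n - 1 := by
  obtain ⟨N, hN, hroots⟩ := Multiset.exists_pow_eq_one_of_forall_isOfFinOrder h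
  set k := Multiset.card q.roots
  refine ⟨N * p ^ k, Nat.mul_pos hN (pow_pos (Fact.out : p.Prime).pos k), ?_⟩
  calc q = (q.roots.map (X - C ·)).prod := hs.eq_prod_roots_of_monic hm
    _ ∣ (q.roots.map fun _ => (X ^ N - 1 : R[X])).prod :=
      Multiset.prod_dvd_prod_of_dvd _ _ fun μ hμ => dvd_iff_isRoot.mpr (by simp [hroots μ hμ])
    _ = (X ^ N - 1) ^ k := by rw [Multiset.map_const', Multiset.prod_replicate]
    _ ∣ (X ^ N - 1) ^ p ^ k := pow_dvd_pow _ (Nat.lt_pow_self (Fact.out : p.Prime).one_lt).le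
    _ = X ^ (N * p ^ k) - 1 := by rw [sub_pow_char_pow, one_pow, ← pow_mul]

theorem Module.End.exists_hasEigenvalue_not_isOfFinOrder {K V : Type*} [Field K] [IsAlgClosed K]
    (p : ℕ) [CharP K p] [Fact p.Prime] [AddCommGroup V] [Module K V] [FiniteDimensional K V]
    {f : Module.End K V} (hf : ¬IsOfFinOrder f) : ∃ μ, f.HasEigenvalue μ ∧ ¬IsOfFinOrder μ := by
  contrapose! hf
  obtain ⟨n, hn, hdvd⟩ := (minpoly.monic (Algebra.IsIntegral.isIntegral f)).exists_dvd_X_pow_sub_one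
    p (IsAlgClosed.splits _) fun μ hμ => hf μ (hasEigenvalue_of_isRoot (isRoot_of_mem_roots hμ))
  refine isOfFinOrder_iff_pow_eq_one.mpr ⟨n, hn, ?_⟩
  simpa [sub_eq_zero] using minpoly.dvd_iff.mp hdvd

theorem exists_monoidHom_multiplicative_rat_eq_ofAdd_one {A : Type*} [CommGroup A] {a : A}
    (ha : ¬IsOfFinOrder a) : ∃ χ : A →* Multiplicative ℚ, χ a = Multiplicative.ofAdd 1 := by
  have hinj : Function.Injective (zmultiplesHom (Additive A) (Additive.ofMul a)) :=
    fun m n hmn => injective_zpow_iff_not_isOfFinOrder.mpr ha hmn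
  obtain ⟨χ, hχ⟩ := (Module.Baer.of_divisible ℚ).extension_property_addMonoidHom _ hinj
    (Int.castAddHom ℚ)
  refine ⟨AddMonoidHom.toMultiplicativeRight χ, ?_⟩
  simpa using congr(Multiplicative.ofAdd ($hχ 1))

def Subrepresentation.eigenspace {k M V : Type*} [CommRing k] [Monoid M] [AddCommGroup V]
    [Module k V] (ρ : Representation k M V) {z : M} (hz : ∀ x, Commute z x) (μ : k) :
    Subrepresentation ρ where
  toSubmodule := Module.End.eigenspace (ρ z) μ
  apply_mem_toSubmodule x := Module.End.mapsTo_genEigenspace_of_comm ((hz x).map ρ) μ 1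

theorem Subrepresentation.det_eigenspace_self {k M V : Type*} [Field k] [Monoid M]
    [AddCommGroup V] [Module k V] (ρ : Representation k M V) {z : M} (hz : ∀ x, Commute z x)
    (μ : k) : LinearMap.det ((eigenspace ρ hz μ).toRepresentation z) =
      μ ^ Module.finrank k (Module.End.eigenspace (ρ z) μ) := by
  rw [show (eigenspace ρ hz μ).toRepresentation z = μ • LinearMap.id from
    Module.End.restrict_eigenspace (ρ z) μ, LinearMap.det_smul, LinearMap.det_id, mul_one]
  rfl

theorem Subrepresentation.not_isOfFinOrder_det_eigenspace_self {k M V : Type*} [Field k]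
    [Monoid M] [AddCommGroup V] [Module k V] [FiniteDimensional k V] (ρ : Representation k M V)
    {z : M} (hz : ∀ x, Commute z x) {μ : k} (hμ : Module.End.HasEigenvalue (ρ z) μ)
    (hμ' : ¬IsOfFinOrder μ) :
    ¬IsOfFinOrder (LinearMap.det ((eigenspace ρ hz μ).toRepresentation z)) := by
  rw [det_eigenspace_self, isOfFinOrder_pow, not_or]
  exact ⟨hμ', Submodule.finrank_eq_zero.not.mpr hμ⟩

theorem Matrix.GeneralLinearGroup.map_injective {n R S : Type*} [DecidableEq n] [Fintype n]
    [CommRing R] [CommRing S] {f : R →+* S} (hf : Function.Injective f) :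
    Function.Injective (map (n := n) f) :=
  Units.map_injective (Matrix.map_injective hf)

theorem stmt_16_general (G : Type*) [Group G]
    (F : Type*) [Field F] (p : ℕ) [CharP F p] (hp : 0 < p)
    (d : ℕ) (ρ : G →* GL (Fin d) F) (hρ : Function.Injective ρ) :
    ¬ ∃ (g : G) (hmem : g ∈ Subgroup.centralizer ({g} : Set G)),
        ¬ IsOfFinOrder g ∧
        ∃ H : Subgroup (Subgroup.centralizer ({g} : Set G)),
          H.FiniteIndex ∧
          (⟨g, hmem⟩ : Subgroup.centralizer ({g} : Set G)) ∈ H ∧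
          ∀ (A : Type) [CommGroup A]
            (φ : Subgroup.centralizer ({g} : Set G) →* A),
            ∃ m : ℕ, 1 ≤ m ∧ φ (⟨g, hmem⟩ ^ m) = 1 := by
  rintro ⟨g, hmem, hg, -, -, -, hkill⟩
  have : NeZero p := ⟨hp.ne'⟩
  have := CharP.char_is_prime_of_pos F p
  let K := AlgebraicClosure F
  let C := Subgroup.centralizer ({g} : Set G)
  let ρK : G →* GL (Fin d) K := (Matrix.GeneralLinearGroup.map (algebraMap F K)).comp ρ
  let σ : Representation K C (Fin d → K) :=
    (Matrix.toLinAlgEquiv' : Matrix (Fin d) (Fin d) K ≃ₐ[K] _).toMonoidHom.comp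
      ((Units.coeHom _).comp (ρK.comp C.subtype))
  let z : C := ⟨g, hmem⟩
  have hz : ∀ x, Commute z x := fun x => Subtype.ext (x.2 g rfl)
  have hσ : Function.Injective σ :=
    Matrix.toLinAlgEquiv'.injective.comp <| Units.val_injective.comp <|
      (Matrix.GeneralLinearGroup.map_injective (algebraMap F K).injective).comp <|
        hρ.comp Subtype.val_injective
  have hσz : ¬IsOfFinOrder (σ z) := by
    rwa [hσ.isOfFinOrder_iff, ← C.subtype_injective.isOfFinOrder_iff]
  obtain ⟨μ, hμ, hμ'⟩ := Module.End.exists_hasEigenvalue_not_isOfFinOrder p hσz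
  let ψ : C →* Kˣ :=
    (LinearMap.det.comp (Subrepresentation.eigenspace σ hz μ).toRepresentation).toHomUnits
  obtain ⟨χ, hχ⟩ := exists_monoidHom_multiplicative_rat_eq_ofAdd_one (a := ψ z) <| by
    rw [← Units.isOfFinOrder_val]
    exact Subrepresentation.not_isOfFinOrder_det_eigenspace_self σ hz hμ hμ'
  obtain ⟨m, hm, hχm⟩ := hkill _ (χ.comp ψ)
  rw [MonoidHom.comp_apply, map_pow, map_pow, hχ, ← ofAdd_nsmul, ofAdd_eq_one, nsmul_one] at hχm
  have : m = 0 := by exact_mod_cast hχm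
  omega

theorem stmt_16 (G : Type*) [Group G] (hFG : Group.FG G)
    (F : Type*) [Field F] (p : ℕ) [CharP F p] (hp : 0 < p)
    (d : ℕ) (ρ : G →* GL (Fin d) F) (hρ : Function.Injective ρ) :
    ¬ ∃ (g : G) (hmem : g ∈ Subgroup.centralizer ({g} : Set G)),
        ¬ IsOfFinOrder g ∧
        ∃ H : Subgroup (Subgroup.centralizer ({g} : Set G)),
          H.FiniteIndex ∧
          (⟨g, hmem⟩ : Subgroup.centralizer ({g} : Set G)) ∈ H ∧
          ∀ (A : Type) [CommGroup A]
            (φ : Subgroup.centralizer ({g} : Set G) →* A),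
            ∃ m : ℕ, 1 ≤ m ∧ φ (⟨g, hmem⟩ ^ m) = 1 :=
  stmt_16_general G F p hp d ρ hρ
end
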